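/- Let X be a connected, locally path connected space. If {H_j : j ∈ J} is any collection of generalized covering subgroups of π₁(X,x₀), then H = ⋂_{j∈J} H_j is a generalized covering subgroup of π₁(X,x₀). -/

import Mathlib

open CategoryTheory unitInterval Topology

universe u v

noncomputable section

attribute [local instance] Path.Homotopic.setoid

namespace GCPaper

variable {X : Type u} [TopologicalSpace X]

/-- The homotopy class of a loop, as an element of the fundamental group. -/
def loopClass {x : X} (γ : Path x x) : FundamentalGroup X x :=
  FundamentalGroup.fromPath ⟦γ⟧

/-- The homomorphism on fundamental groups induced by a continuous map. -/
def π₁map {A B : Type u} [TopologicalSpace A] [TopologicalSpace B] (f : C(A, B)) (a : A) :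
    FundamentalGroup A a →* FundamentalGroup B (f a) :=
  Functor.mapEnd (FundamentalGroupoid.mk (a : TopCat.of A))
    ((FundamentalGroupoid.fundamentalGroupoidFunctor.map (TopCat.ofHom f) :
        Grpd.of (FundamentalGroupoid (TopCat.of A)) ⟶ Grpd.of (FundamentalGroupoid (TopCat.of B))) :
      FundamentalGroupoid (TopCat.of A) ⥤ FundamentalGroupoid (TopCat.of B))

/-- Transport of the fundamental group along an equality of basepoints. -/
def eqCast {x x' : X} (h : x = x') : FundamentalGroup X x ≃* FundamentalGroup X x' := by
  subst h; exact MulEquiv.refl _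

/-- `f₁*π₁(A, a)`, the image of the fundamental group of `A` in the fundamental group of `B`,
based at a point `x` equal to `f a`. -/
def imageSubgroup {A : Type u} [TopologicalSpace A]
    (f : C(A, X)) (a : A) (x : X) (h : f a = x) : Subgroup (FundamentalGroup X x) :=
  Subgroup.map (eqCast h).toMonoidHom (π₁map f a).range

/-- `i_*π₁(U, x)`, the image of the fundamental group of `U` in the fundamental group of `X`
under the inclusion-induced homomorphism. -/
def iStar (x : X) (U : Set X) (hx : x ∈ U) : Subgroup (FundamentalGroup X x) :=
  imageSubgroup ⟨(Subtype.val : U → X), continuous_subtype_val⟩ ⟨x, hx⟩ x rfl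

/-- The set of homotopy classes of small loops at `x` :
loops which have a representative in every open neighbourhood of `x`. -/
def smallSet (x : X) : Set (FundamentalGroup X x) :=
  { g | ∀ (U : Set X) (_ : IsOpen U) (hx : x ∈ U), g ∈ iStar x U hx }

/-- Conjugation of a loop class at `x` along a path `α` from `x₀` to `x` :
`g ↦ [α ∗ g ∗ α⁻¹]`. -/
def conjAlong {x₀ x : X} (α : Path x₀ x) (g : FundamentalGroup X x) : FundamentalGroup X x₀ :=
  (FundamentalGroup.fundamentalGroupMulEquivOfPath α).symm g

/-- The subgroup `[α⁻¹ H α]` of `π₁(X, x)` for a path `α` from `x₀` to `x` and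
`H ≤ π₁(X, x₀)`. -/
def conjSubgroup {x₀ x : X} (α : Path x₀ x) (H : Subgroup (FundamentalGroup X x₀)) :
    Subgroup (FundamentalGroup X x) :=
  Subgroup.map (FundamentalGroup.fundamentalGroupMulEquivOfPath α).toMonoidHom H

/-- `π₁^sg(X, x₀)`: the subgroup generated by small loops conjugated along paths from `x₀`. -/
def sgSubgroup (x₀ : X) : Subgroup (FundamentalGroup X x₀) :=
  Subgroup.closure { g | ∃ (x : X) (α : Path x₀ x) (s : FundamentalGroup X x),
    s ∈ smallSet x ∧ g = conjAlong α s }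

/-- The Spanier group of an open cover. -/
def spanierGroup (x₀ : X) (𝒰 : Set (Set X)) : Subgroup (FundamentalGroup X x₀) :=
  Subgroup.closure { g | ∃ (x : X) (α : Path x₀ x) (U : Set X) (_ : U ∈ 𝒰) (β : Path x x),
    Set.range β ⊆ U ∧ g = conjAlong α (loopClass β) }

/-- `X` is semilocally small generated (at `x₀`). -/
def SemilocallySmallGenerated (x₀ : X) : Prop :=
  ∃ 𝒰 : Set (Set X), (∀ U ∈ 𝒰, IsOpen U) ∧ ⋃₀ 𝒰 = Set.univ ∧
    spanierGroup x₀ 𝒰 ≤ sgSubgroup x₀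

/-- `X` is homotopically Hausdorff relative to the subgroup `H`. -/
def HomotopicallyHausdorffRel (x₀ : X) (H : Subgroup (FundamentalGroup X x₀)) : Prop :=
  ∀ (x : X) (α : Path x₀ x) (g : FundamentalGroup X x₀), g ∉ H →
    ∃ U : Set X, IsOpen U ∧ x ∈ U ∧
      ∀ γ : Path x x, Set.range γ ⊆ U → ¬ ∃ h ∈ H, conjAlong α (loopClass γ) = h * g

/-- The quasitopological fundamental group topology: the quotient topology induced by the
compact-open topology on the loop space. -/
def qtop (X : Type u) [TopologicalSpace X] (x : X) : TopologicalSpace (FundamentalGroup X x) :=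
  TopologicalSpace.coinduced (fun γ : Path x x => loopClass γ) inferInstance

/-- The basic sets of the whisker topology on the fundamental group. -/
def whBasis (X : Type u) [TopologicalSpace X] (x₀ : X) : Set (Set (FundamentalGroup X x₀)) :=
  { S | ∃ (g : FundamentalGroup X x₀) (U : Set X) (_ : IsOpen U) (hx : x₀ ∈ U),
      S = (g * ·) '' (iStar x₀ U hx : Set (FundamentalGroup X x₀)) }

/-- The whisker topology on the fundamental group. -/
def whTop (X : Type u) [TopologicalSpace X] (x₀ : X) :
    TopologicalSpace (FundamentalGroup X x₀) :=
  TopologicalSpace.generateFrom (whBasis X x₀)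

/-- The unique lifting property for a pointed map `p : (X', x') → (X, p x')`. -/
def HasUL {X' : Type u} [TopologicalSpace X'] (p : C(X', X)) (x' : X') : Prop :=
  ∀ (Y : Type u) (_ : TopologicalSpace Y) (y : Y), ConnectedSpace Y → LocPathConnectedSpace Y →
    ∀ (f : C(Y, X)) (hf : f y = p x'),
      imageSubgroup f y (p x') hf ≤ imageSubgroup p x' (p x') rfl →
      ∃! g : C(Y, X'), g y = x' ∧ p.comp g = f

/-- `H` is a generalized covering subgroup of `π₁(X, x₀)`. -/
def IsGCSubgroup (x₀ : X) (H : Subgroup (FundamentalGroup X x₀)) : Prop :=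
  ∃ (X' : Type u) (_ : TopologicalSpace X') (x' : X') (p : C(X', X)) (hp : p x' = x₀),
    ConnectedSpace X' ∧ LocPathConnectedSpace X' ∧ HasUL p x' ∧ imageSubgroup p x' x₀ hp = H

/-- `π₁^gc(X, x₀)`: the intersection of all generalized covering subgroups. -/
def gcSubgroup (X : Type u) [TopologicalSpace X] (x₀ : X) : Subgroup (FundamentalGroup X x₀) :=
  sInf { H | IsGCSubgroup x₀ H }

/-- Unique path lifting: paths lift with prescribed initial point, and lifts with the same
initial point are unique. -/
def UniquePathLifts {X' : Type u} [TopologicalSpace X'] (p : X' → X) : Prop :=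
  (∀ (γ : C(I, X)) (x' : X'), p x' = γ 0 → ∃ γ' : C(I, X'), γ' 0 = x' ∧ p ∘ γ' = γ) ∧
  (∀ γ₁ γ₂ : C(I, X'), γ₁ 0 = γ₂ 0 → p ∘ γ₁ = p ∘ γ₂ → γ₁ = γ₂)

/-- `H` is a semicovering subgroup of `π₁(X, x₀)`. -/
def IsSemicoveringSubgroup (x₀ : X) (H : Subgroup (FundamentalGroup X x₀)) : Prop :=
  ∃ (X' : Type u) (_ : TopologicalSpace X') (x' : X') (p : C(X', X)) (hp : p x' = x₀),
    ConnectedSpace X' ∧ LocPathConnectedSpace X' ∧ Function.Surjective p ∧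
    IsLocalHomeomorph p ∧ UniquePathLifts (p : X' → X) ∧ imageSubgroup p x' x₀ hp = H

/-- `H` is a covering subgroup of `π₁(X, x₀)`. -/
def IsCoveringSubgroup (x₀ : X) (H : Subgroup (FundamentalGroup X x₀)) : Prop :=
  ∃ (X' : Type u) (_ : TopologicalSpace X') (x' : X') (p : C(X', X)) (hp : p x' = x₀),
    ConnectedSpace X' ∧ LocPathConnectedSpace X' ∧ IsCoveringMap p ∧ imageSubgroup p x' x₀ hp = H

/-- `X` is semilocally `K`-connected at `x`. -/
def SemilocallyConnectedAt (x : X) (K : Subgroup (FundamentalGroup X x)) : Prop :=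
  ∃ (U : Set X) (_ : IsOpen U) (hx : x ∈ U), iStar x U hx ≤ K

section WhiskerSpace

variable {X : Type u} [TopologicalSpace X] {x₀ : X}

/-- The space of paths in `X` starting at `x₀`, recorded with their endpoints. -/
def PathStar (x₀ : X) : Type u := Σ x : X, Path x₀ x

/-- The relation identifying two paths `α, β` from `x₀` when they have the same endpoint and
`[α ∗ β⁻¹] ∈ H`. -/
def whiskerRel (H : Subgroup (FundamentalGroup X x₀)) :
    PathStar x₀ → PathStar x₀ → Prop := fun a b =>
  ∃ h : b.1 = a.1, loopClass (a.2.trans (h ▸ b.2 : Path x₀ a.1).symm) ∈ H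

/-- The space `X̃_H` of `∼_H`-classes of paths starting at `x₀`. -/
def XH (H : Subgroup (FundamentalGroup X x₀)) : Type u := Quot (whiskerRel H)

/-- The endpoint projection `p_H : X̃_H → X`. -/
def pH (H : Subgroup (FundamentalGroup X x₀)) : XH H → X :=
  Quot.lift (fun a => a.1) (by rintro a b ⟨h, -⟩; exact h.symm)

/-- The point of `X̃_H` given by the class of a path from `x₀`. -/
def XH.mk (H : Subgroup (FundamentalGroup X x₀)) (a : PathStar x₀) : XH H :=
  Quot.mk (whiskerRel H) a

/-- The basepoint `ẽ_H` of `X̃_H`: the class of the constant path at `x₀`. -/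
def eH (H : Subgroup (FundamentalGroup X x₀)) : XH H :=
  XH.mk H ⟨x₀, Path.refl x₀⟩

/-- The basic set `(U, ⟨α⟩_H)` of the whisker topology on `X̃_H`: classes of continuations of
`α` inside `U`. -/
def contSet (H : Subgroup (FundamentalGroup X x₀)) (a : PathStar x₀) (U : Set X) :
    Set (XH H) :=
  { z | ∃ (y : X) (γ : Path a.1 y), Set.range γ ⊆ U ∧ z = XH.mk H ⟨y, a.2.trans γ⟩ }

/-- The whisker topology on `X̃_H`. -/
instance XH.topologicalSpace (H : Subgroup (FundamentalGroup X x₀)) :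
    TopologicalSpace (XH H) :=
  TopologicalSpace.generateFrom
    { S | ∃ (a : PathStar x₀) (U : Set X), IsOpen U ∧ S = contSet H a U }

lemma XH.mk_trans_refl (H : Subgroup (FundamentalGroup X x₀)) (a : PathStar x₀) :
    XH.mk H ⟨a.1, a.2.trans (Path.refl a.1)⟩ = XH.mk H a := by
  apply Quot.sound
  refine ⟨rfl, ?_⟩
  have h1 : (a.2.trans (Path.refl a.1)).Homotopic a.2 := ⟨Path.Homotopy.transRefl a.2⟩
  have h2 : ((a.2.trans (Path.refl a.1)).trans a.2.symm).Homotopic (a.2.trans a.2.symm) :=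
    h1.hcomp (Path.Homotopic.refl _)
  have h3 : (a.2.trans a.2.symm).Homotopic (Path.refl x₀) :=
    ⟨(Path.Homotopy.reflTransSymm a.2).symm⟩
  have : loopClass ((a.2.trans (Path.refl a.1)).trans a.2.symm) = 1 := by
    exact (Quotient.sound (h2.trans h3) : _ = (⟦Path.refl x₀⟧ : Path.Homotopic.Quotient x₀ x₀))
  exact this ▸ H.one_mem

lemma continuous_pH (H : Subgroup (FundamentalGroup X x₀)) : Continuous (pH H) := by
  rw [continuous_def]
  intro U hU
  have : pH H ⁻¹' U = ⋃ (a : PathStar x₀) (_ : a.1 ∈ U), contSet H a U := by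
    ext z
    constructor
    · intro hz
      obtain ⟨a, rfl⟩ := Quot.exists_rep z
      refine Set.mem_iUnion₂.mpr ⟨a, hz, a.1, Path.refl a.1, ?_, (XH.mk_trans_refl H a).symm⟩
      rw [Path.refl_range]
      exact Set.singleton_subset_iff.mpr hz
    · intro hz
      obtain ⟨a, ha, y, γ, hγ, rfl⟩ := Set.mem_iUnion₂.mp hz
      have : y ∈ U := hγ ⟨1, γ.target⟩
      exact this
  rw [this]
  exact isOpen_iUnion fun a => isOpen_iUnion fun ha =>
    TopologicalSpace.isOpen_generateFrom_of_mem ⟨a, U, hU, rfl⟩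

/-- The endpoint projection `p_H` as a continuous map. -/
def pHMap (H : Subgroup (FundamentalGroup X x₀)) : C(XH H, X) :=
  ⟨pH H, continuous_pH H⟩

end WhiskerSpace

end GCPaper

open GCPaper

/-! Given generalized coverings `p j : X̃ⱼ → X` with images `H j`, take the path component of the
basepoint in their fibre product over `X`, retopologized by its lpc coreflection, and project
it to `X`. A map from a connected lpc space whose image on `π₁` lies in `⋂ H j` lifts uniquely
to every `X̃ⱼ`, hence uniquely to the fibre product. Conversely a loop whose class lies in
`⋂ H j` lifts to a loop in every `X̃ⱼ` (lift a homotopy on the square), and these lifts together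
form a loop in the fibre product. -/

namespace GCPaper

open TopologicalSpace Set

section FundamentalGroup

variable {X : Type u} [TopologicalSpace X]

lemma loopClass_surjective {x : X} :
    Function.Surjective (loopClass : Path x x → FundamentalGroup X x) :=
  Quotient.exists_rep

lemma loopClass_eq_loopClass_iff {x : X} {γ γ' : Path x x} :
    loopClass γ = loopClass γ' ↔ γ.Homotopic γ' :=
  Quotient.eq

lemma eqCast_π₁map_loopClass {A : Type u} [TopologicalSpace A] (f : C(A, X)) {a : A} {x : X}
    (h : f a = x) (δ : Path a a) :
    eqCast h (π₁map f a (loopClass δ)) =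
      loopClass ((δ.map f.continuous).cast h.symm h.symm) := by
  subst h
  rfl

lemma mem_imageSubgroup_iff {A : Type u} [TopologicalSpace A] (f : C(A, X)) (a : A) (x : X)
    (h : f a = x) (g : FundamentalGroup X x) :
    g ∈ imageSubgroup f a x h ↔
      ∃ δ : Path a a, loopClass ((δ.map f.continuous).cast h.symm h.symm) = g := by
  simp only [imageSubgroup, Subgroup.mem_map, MonoidHom.mem_range]
  constructor
  · rintro ⟨_, ⟨g', rfl⟩, rfl⟩
    obtain ⟨δ, rfl⟩ := loopClass_surjective g'
    exact ⟨δ, (eqCast_π₁map_loopClass f h δ).symm⟩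
  · rintro ⟨δ, rfl⟩
    exact ⟨_, ⟨loopClass δ, rfl⟩, eqCast_π₁map_loopClass f h δ⟩

lemma imageSubgroup_le_of_simplyConnectedSpace {A : Type u} [TopologicalSpace A]
    [SimplyConnectedSpace A] (f : C(A, X)) (a : A) (x : X) (h : f a = x)
    (K : Subgroup (FundamentalGroup X x)) : imageSubgroup f a x h ≤ K := by
  rintro _ ⟨_, ⟨g, rfl⟩, rfl⟩
  rw [Subsingleton.elim g 1, map_one, map_one]
  exact K.one_mem

lemma imageSubgroup_le_of_comp_eq {A B : Type u} [TopologicalSpace A] [TopologicalSpace B]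
    (p : C(B, X)) (q : C(A, B)) {p' : C(A, X)} (hpq : p.comp q = p') {a : A} {b : B}
    (hb : q a = b) {x : X} (h' : p' a = x) (h : p b = x) :
    imageSubgroup p' a x h' ≤ imageSubgroup p b x h := by
  subst hpq hb
  intro g hg
  obtain ⟨δ, rfl⟩ := (mem_imageSubgroup_iff _ _ _ _ _).1 hg
  exact (mem_imageSubgroup_iff _ _ _ _ _).2 ⟨δ.map q.continuous, rfl⟩

end FundamentalGroup

instance : LocallyPathConnectedSpace I :=
  (convex_Icc (0 : ℝ) 1).locallyPathConnectedSpace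

instance : ContractibleSpace I :=
  (convex_Icc (0 : ℝ) 1).contractibleSpace (nonempty_Icc.2 zero_le_one)

instance {Z : Type*} [TopologicalSpace Z] [LocallyPathConnectedSpace Z] :
    LocallyPathConnectedSpace (ULift Z) :=
  Homeomorph.ulift.isOpenEmbedding.locallyPathConnectedSpace

instance {Z : Type*} [TopologicalSpace Z] [ContractibleSpace Z] : ContractibleSpace (ULift Z) :=
  Homeomorph.ulift.contractibleSpace

instance {Z : Type*} [TopologicalSpace Z] (z : Z) : PathConnectedSpace (pathComponent z) :=
  isPathConnected_iff_pathConnectedSpace.1 isPathConnected_pathComponent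

lemma Continuous.image_pathComponentIn_preimage_subset {Y Z : Type*} [TopologicalSpace Y]
    [TopologicalSpace Z] {f : Y → Z} (hf : Continuous f) {U : Set Z} {y : Y} (hy : f y ∈ U) :
    f '' pathComponentIn (f ⁻¹' U) y ⊆ pathComponentIn U (f y) :=
  ((isPathConnected_pathComponentIn (show y ∈ f ⁻¹' U from hy)).image hf).subset_pathComponentIn
    ⟨y, mem_pathComponentIn_self hy, rfl⟩
    ((image_mono pathComponentIn_subset).trans (image_preimage_subset f U))

structure LpcCoreflection (Z : Type*) where
  mk ::
  down : Z

namespace LpcCoreflection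

variable {Z : Type*} [TopologicalSpace Z]

def basis (Z : Type*) [TopologicalSpace Z] : Set (Set (LpcCoreflection Z)) :=
  {S | ∃ (U : Set Z) (z : Z), IsOpen U ∧ S = down ⁻¹' pathComponentIn U z}

instance : TopologicalSpace (LpcCoreflection Z) := generateFrom (basis Z)

lemma isTopologicalBasis_basis : IsTopologicalBasis (basis Z) where
  exists_subset_inter := by
    rintro _ ⟨U₁, z₁, hU₁, rfl⟩ _ ⟨U₂, z₂, hU₂, rfl⟩ w ⟨h₁, h₂⟩
    refine ⟨_, ⟨U₁ ∩ U₂, w.down, hU₁.inter hU₂, rfl⟩,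
      mem_pathComponentIn_self ⟨pathComponentIn_subset h₁, pathComponentIn_subset h₂⟩, ?_⟩
    rw [← pathComponentIn_congr h₁, ← pathComponentIn_congr h₂]
    exact preimage_mono
      (subset_inter (pathComponentIn_mono inter_subset_left)
        (pathComponentIn_mono inter_subset_right))
  sUnion_eq := sUnion_eq_univ_iff.2 fun w =>
    ⟨_, ⟨univ, w.down, isOpen_univ, rfl⟩, mem_pathComponentIn_self (mem_univ _)⟩
  eq_generateFrom := rfl

@[fun_prop]
lemma continuous_down : Continuous (down : LpcCoreflection Z → Z) :=
  continuous_def.2 fun U hU => isTopologicalBasis_basis.isOpen_iff.2 fun w hw =>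
    ⟨_, ⟨U, w.down, hU, rfl⟩, mem_pathComponentIn_self hw, preimage_mono pathComponentIn_subset⟩

lemma continuous_mk_comp {Y : Type*} [TopologicalSpace Y] [LocallyPathConnectedSpace Y]
    {f : Y → Z} (hf : Continuous f) : Continuous fun y => mk (f y) := by
  refine continuous_generateFrom_iff.2 ?_
  rintro _ ⟨U, z, hU, rfl⟩
  refine isOpen_iff_mem_nhds.2 fun y (hy : f y ∈ pathComponentIn U z) => ?_
  have hyU : f y ∈ U := pathComponentIn_subset hy
  refine Filter.mem_of_superset
    (((hU.preimage hf).pathComponentIn y).mem_nhds (mem_pathComponentIn_self hyU)) ?_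
  intro y' hy'
  show f y' ∈ pathComponentIn U z
  rw [← pathComponentIn_congr hy]
  exact hf.image_pathComponentIn_preimage_subset hyU ⟨y', hy', rfl⟩

def mapPath {a b : Z} (γ : Path a b) : Path (mk a) (mk b) where
  toFun t := mk (γ t)
  continuous_toFun := continuous_mk_comp γ.continuous
  source' := congrArg mk γ.source
  target' := congrArg mk γ.target

lemma isPathConnected_preimage_down {S : Set Z} (hS : IsPathConnected S) :
    IsPathConnected (down ⁻¹' S) := by
  obtain ⟨b, hb, hjoin⟩ := hS
  refine ⟨mk b, hb, fun {w} (hw : w.down ∈ S) => ?_⟩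
  obtain ⟨γ, hγ⟩ := hjoin hw
  exact ⟨mapPath γ, hγ⟩

instance : LocallyPathConnectedSpace (LpcCoreflection Z) := by
  refine .of_bases (fun _ => isTopologicalBasis_basis.nhds_hasBasis) ?_
  rintro _ _ ⟨⟨U, z, -, rfl⟩, hw⟩
  exact isPathConnected_preimage_down
    (isPathConnected_pathComponentIn (pathComponentIn_nonempty_iff.1 ⟨_, hw⟩))

instance [PathConnectedSpace Z] : PathConnectedSpace (LpcCoreflection Z) :=
  pathConnectedSpace_iff_univ.2 (isPathConnected_preimage_down isPathConnected_univ)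

end LpcCoreflection

namespace HasUL

variable {X X' : Type u} [TopologicalSpace X] [TopologicalSpace X'] {p : C(X', X)} {x' : X'}

lemma existsUnique_lift (hUL : HasUL p x') {x₀ : X} (hp : p x' = x₀) {Y : Type u}
    [TopologicalSpace Y] [ConnectedSpace Y] [LocallyPathConnectedSpace Y] {y : Y} (f : C(Y, X))
    (hf : f y = x₀) (hsub : imageSubgroup f y x₀ hf ≤ imageSubgroup p x' x₀ hp) :
    ∃! g : C(Y, X'), g y = x' ∧ p.comp g = f := by
  subst hp
  exact hUL Y _ y ‹_› ‹_› f hf hsub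

lemma exists_lift (hUL : HasUL p x') {Y : Type u} [TopologicalSpace Y] [SimplyConnectedSpace Y]
    [LocallyPathConnectedSpace Y] {y : Y} (f : C(Y, X)) (hf : f y = p x') :
    ∃ g : C(Y, X'), g y = x' ∧ p.comp g = f :=
  (hUL.existsUnique_lift rfl f hf (imageSubgroup_le_of_simplyConnectedSpace _ _ _ _ _)).exists

lemma eq_of_comp_eq (hUL : HasUL p x') {Y : Type u} [TopologicalSpace Y]
    [SimplyConnectedSpace Y] [LocallyPathConnectedSpace Y] {y : Y} {g₁ g₂ : C(Y, X')}
    (h₁ : g₁ y = x') (h₂ : g₂ y = x') (h : p.comp g₁ = p.comp g₂) : g₁ = g₂ :=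
  (hUL.existsUnique_lift rfl (p.comp g₂) (congrArg p h₂)
    (imageSubgroup_le_of_simplyConnectedSpace _ _ _ _ _)).unique ⟨h₁, h⟩ ⟨h₂, rfl⟩

lemma exists_lift_square (hUL : HasUL p x') (F : C(I × I, X)) (hF : F (0, 0) = p x') :
    ∃ K : I × I → X', Continuous K ∧ K (0, 0) = x' ∧ ∀ z, p (K z) = F z := by
  obtain ⟨K, hK₀, hK⟩ := hUL.exists_lift (Y := ULift.{u} (I × I)) (y := ⟨(0, 0)⟩)
    (F.comp ⟨ULift.down, continuous_uliftDown⟩) hF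
  exact ⟨fun z => K ⟨z⟩, K.continuous.comp continuous_uliftUp, hK₀,
    fun z => congr($hK ⟨z⟩)⟩

lemma eq_of_comp_eq_unitInterval (hUL : HasUL p x') {g₁ g₂ : I → X'} (hg₁ : Continuous g₁)
    (hg₂ : Continuous g₂) (h₁ : g₁ 0 = x') (h₂ : g₂ 0 = x')
    (h : ∀ t, p (g₁ t) = p (g₂ t)) : g₁ = g₂ := by
  have := hUL.eq_of_comp_eq (Y := ULift.{u} I) (y := ⟨0⟩)
    (g₁ := ⟨fun t => g₁ t.down, hg₁.comp continuous_uliftDown⟩)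
    (g₂ := ⟨fun t => g₂ t.down, hg₂.comp continuous_uliftDown⟩) h₁ h₂
    (ContinuousMap.ext fun t => h t.down)
  exact funext fun t => congr($this ⟨t⟩)

/-- The lift of a homotopy from `p ∘ δ₀` to `γ` has constant bottom and top edges, so its
right edge is a loop over `γ`. -/
lemma exists_loop_lift (hUL : HasUL p x') {x₀ : X} (hp : p x' = x₀) (γ : Path x₀ x₀)
    (hγ : loopClass γ ∈ imageSubgroup p x' x₀ hp) :
    ∃ δ : Path x' x', ∀ t, p (δ t) = γ t := by
  subst hp
  obtain ⟨δ₀, hδ₀⟩ := (mem_imageSubgroup_iff _ _ _ _ _).1 hγ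
  obtain ⟨F⟩ := loopClass_eq_loopClass_iff.1 hδ₀
  obtain ⟨K, hKc, hK₀, hK⟩ := hUL.exists_lift_square F.toContinuousMap
    ((F.apply_zero 0).trans (congrArg p δ₀.source))
  have bottom := hUL.eq_of_comp_eq_unitInterval (g₁ := fun s => K (s, 0)) (g₂ := fun _ => x')
    (by fun_prop) continuous_const hK₀ rfl fun s => (hK _).trans (F.source s)
  have left := hUL.eq_of_comp_eq_unitInterval (g₁ := fun t => K (0, t)) (g₂ := δ₀)
    (by fun_prop) δ₀.continuous hK₀ δ₀.source fun t => (hK _).trans (F.apply_zero t)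
  have top := hUL.eq_of_comp_eq_unitInterval (g₁ := fun s => K (s, 1)) (g₂ := fun _ => x')
    (by fun_prop) continuous_const (congrFun left 1 |>.trans δ₀.target) rfl
    fun s => (hK _).trans (F.target s)
  exact ⟨⟨⟨fun t => K (1, t), by fun_prop⟩, congrFun bottom 1, congrFun top 1⟩,
    fun t => (hK _).trans (F.apply_one t)⟩

end HasUL

section FiberProduct

variable {X : Type u} [TopologicalSpace X] {x₀ : X} {ι : Type u} {Xs : ι → Type u}
  [∀ j, TopologicalSpace (Xs j)] (p : ∀ j, C(Xs j, X)) (xs : ∀ j, Xs j)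
  (hp : ∀ j, p j (xs j) = x₀)

def fiberProduct : Set (X × ∀ j, Xs j) := {z | ∀ j, p j (z.2 j) = z.1}

abbrev FiberProductSpace : Type u :=
  LpcCoreflection (pathComponent (⟨(x₀, xs), hp⟩ : fiberProduct p))

namespace FiberProductSpace

def base : FiberProductSpace p xs hp := .mk ⟨_, mem_pathComponent_self _⟩

def proj : C(FiberProductSpace p xs hp, X) := ⟨fun z => z.down.1.1.1, by fun_prop⟩

def coord (j : ι) : C(FiberProductSpace p xs hp, Xs j) :=
  ⟨fun z => z.down.1.1.2 j, by fun_prop⟩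

variable {p xs hp}

lemma comp_coord (j : ι) : (p j).comp (coord p xs hp j) = proj p xs hp :=
  ContinuousMap.ext fun z => z.down.1.2 j

lemma ext_iff {z₁ z₂ : FiberProductSpace p xs hp} :
    z₁ = z₂ ↔
      proj p xs hp z₁ = proj p xs hp z₂ ∧ ∀ j, coord p xs hp j z₁ = coord p xs hp j z₂ := by
  refine ⟨fun h => h ▸ ⟨rfl, fun _ => rfl⟩, fun ⟨h₁, h₂⟩ => ?_⟩
  obtain ⟨⟨⟨z₁, _⟩, _⟩⟩ := z₁
  obtain ⟨⟨⟨z₂, _⟩, _⟩⟩ := z₂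
  congr
  exact Prod.ext h₁ (funext h₂)

lemma exists_lift {Y : Type*} [TopologicalSpace Y] [PathConnectedSpace Y]
    [LocallyPathConnectedSpace Y] {y : Y} (f : C(Y, X)) (g : ∀ j, C(Y, Xs j))
    (hfg : ∀ j, (p j).comp (g j) = f) (hf : f y = x₀) (hg : ∀ j, g j y = xs j) :
    ∃ G : C(Y, FiberProductSpace p xs hp), G y = base p xs hp ∧ (proj p xs hp).comp G = f ∧
      ∀ j, (coord p xs hp j).comp G = g j := by
  let G₀ : C(Y, fiberProduct p) :=
    ⟨fun z => ⟨(f z, fun j => g j z), fun j => congr($(hfg j) z)⟩, by fun_prop⟩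
  have hG₀ : G₀ y = ⟨(x₀, xs), hp⟩ := Subtype.ext (Prod.ext hf (funext hg))
  have hmem : ∀ z, G₀ z ∈ pathComponent (⟨(x₀, xs), hp⟩ : fiberProduct p) := fun z =>
    hG₀ ▸ (isPathConnected_range G₀.continuous).subset_pathComponent ⟨y, rfl⟩ ⟨z, rfl⟩
  refine ⟨⟨fun z => .mk ⟨G₀ z, hmem z⟩, LpcCoreflection.continuous_mk_comp (by fun_prop)⟩,
    ?_, rfl, fun _ => rfl⟩
  exact ext_iff.2 ⟨hf, hg⟩

lemma imageSubgroup_proj_le (j : ι) :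
    imageSubgroup (proj p xs hp) (base p xs hp) x₀ rfl ≤
      imageSubgroup (p j) (xs j) x₀ (hp j) :=
  imageSubgroup_le_of_comp_eq (p j) (coord p xs hp j) (comp_coord j) rfl rfl (hp j)

lemma hasUL_proj (hUL : ∀ j, HasUL (p j) (xs j)) : HasUL (proj p xs hp) (base p xs hp) := by
  intro Y _ y _ hY f hf hsub
  have : LocallyPathConnectedSpace Y := hY
  have : PathConnectedSpace Y := pathConnectedSpace_iff_connectedSpace.2 ‹_›
  choose g hg hg_unique using fun j =>
    (hUL j).existsUnique_lift (hp j) f hf (hsub.trans (imageSubgroup_proj_le j))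
  obtain ⟨G, hGy, hGf, hGg⟩ := exists_lift f g (fun j => (hg j).2) hf (fun j => (hg j).1)
  refine ⟨G, ⟨hGy, hGf⟩, fun G' ⟨hG'y, hG'f⟩ => ContinuousMap.ext fun z => ?_⟩
  refine ext_iff.2 ⟨congr($(hG'f.trans hGf.symm) z), fun j => ?_⟩
  have hcoord := hg_unique j ((coord p xs hp j).comp G')
    ⟨congrArg (coord p xs hp j) hG'y, by rw [← ContinuousMap.comp_assoc, comp_coord, hG'f]⟩
  exact congr($(hcoord.trans (hGg j).symm) z)

lemma imageSubgroup_proj (hUL : ∀ j, HasUL (p j) (xs j)) :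
    imageSubgroup (proj p xs hp) (base p xs hp) x₀ rfl =
      ⨅ j, imageSubgroup (p j) (xs j) x₀ (hp j) := by
  refine le_antisymm (le_iInf imageSubgroup_proj_le) fun g hg => ?_
  obtain ⟨γ, rfl⟩ := loopClass_surjective g
  choose δ hδ using fun j => (hUL j).exists_loop_lift (hp j) γ (Subgroup.mem_iInf.1 hg j)
  obtain ⟨G, hG₀, hGf, hGg⟩ := exists_lift (hp := hp) (y := (0 : I)) γ.toContinuousMap
    (fun j => (δ j).toContinuousMap) (fun j => ContinuousMap.ext (hδ j)) γ.source
    (fun j => (δ j).source)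
  have hG₁ : G 1 = base p xs hp := ext_iff.2
    ⟨congr($hGf 1).trans γ.target, fun j => congr($(hGg j) 1).trans (δ j).target⟩
  refine (mem_imageSubgroup_iff _ _ _ _ _).2 ⟨⟨G, hG₀, hG₁⟩, congrArg loopClass ?_⟩
  ext t
  exact congr($hGf t)

end FiberProductSpace

end FiberProduct

theorem isGCSubgroup_iInf {X : Type u} [TopologicalSpace X] (x₀ : X) {ι : Type u}
    (H : ι → Subgroup (FundamentalGroup X x₀)) (hH : ∀ j, IsGCSubgroup x₀ (H j)) :
    IsGCSubgroup x₀ (⨅ j, H j) := by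
  choose Xs _ xs p hp _ _ hUL hpH using hH
  refine ⟨FiberProductSpace p xs hp, inferInstance, FiberProductSpace.base p xs hp,
    FiberProductSpace.proj p xs hp, rfl, inferInstance,
    (inferInstance : LocallyPathConnectedSpace _), FiberProductSpace.hasUL_proj hUL, ?_⟩
  simp only [FiberProductSpace.imageSubgroup_proj hUL, hpH]

end GCPaper

theorem statement_4_general {X : Type u} [TopologicalSpace X] (x₀ : X) {ι : Type v}
    (H : ι → Subgroup (FundamentalGroup X x₀)) (hH : ∀ j, IsGCSubgroup x₀ (H j)) :
    IsGCSubgroup x₀ (⨅ j, H j) := by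
  -- reindexing by the set of subgroups brings the index type into the universe of `X`
  have := isGCSubgroup_iInf x₀ (fun K : Set.range H => (K : Subgroup _))
    (by rintro ⟨_, j, rfl⟩; exact hH j)
  rwa [iInf_range' (fun K => K) H] at this

/-- For `X` connected and locally path connected, the intersection of any
collection of generalized covering subgroups of `π₁(X,x₀)` is a generalized covering
subgroup. -/
theorem statement_4 {X : Type u} [TopologicalSpace X] [ConnectedSpace X]
    [LocallyPathConnectedSpace X] (x₀ : X) {ι : Type v}
    (H : ι → Subgroup (FundamentalGroup X x₀)) (hH : ∀ j, IsGCSubgroup x₀ (H j)) :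
    IsGCSubgroup x₀ (⨅ j, H j) :=
  statement_4_general x₀ H hH
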